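/- arXiv:2105.06710 — 2 statements merged into one kernel-verified Lean document; each statement's English description precedes it below -/
import Mathlib

section
/- (Bonnet–Myers type inequality) Let H be a hypergraph such that for some κ > 0 the h-LLY–Ricci curvature satisfies κ̃(h;x,y) ≥ κ for all adjacent vertices x, y. Then the diameter of H satisfies diam(H) ≤ ⌊(h'(1)/h(1)) · (2/κ)⌋. -/
open Filter Set Classical

noncomputable section

/-- A hypergraph: a vertex type together with a family of hyperedges. -/
structure Hypergraph' (V : Type*) where
  E : Set (Set V)

namespace Hypergraph'

variable {V : Type*}

/-- Two distinct vertices are adjacent if some hyperedge contains both. -/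
def Adj (H : Hypergraph' V) (x y : V) : Prop :=
  x ≠ y ∧ ∃ e ∈ H.E, x ∈ e ∧ y ∈ e

/-- There is a path of length `n` from `x` to `y` (each consecutive pair lies
in a common hyperedge). -/
def IsPath (H : Hypergraph' V) (x y : V) (n : ℕ) : Prop :=
  ∃ f : ℕ → V, f 0 = x ∧ f n = y ∧ ∀ i < n, ∃ e ∈ H.E, f i ∈ e ∧ f (i + 1) ∈ e

/-- The graph distance on a hypergraph: the shortest length of a path. -/
def dist (H : Hypergraph' V) (x y : V) : ℕ :=
  sInf {n | H.IsPath x y n}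

def Connected (H : Hypergraph' V) : Prop := ∀ x y : V, ∃ n, H.IsPath x y n

def LocallyFinite (H : Hypergraph' V) : Prop := ∀ x : V, {y | H.Adj x y}.Finite

/-- A hypergraph is simple if no hyperedge is contained in a different one. -/
def Simple (H : Hypergraph' V) : Prop :=
  ∀ e₁ ∈ H.E, ∀ e₂ ∈ H.E, e₁ ≠ e₂ → ¬e₁ ⊆ e₂

/-- The degree of a vertex: the number of its neighbours. -/
def degree (H : Hypergraph' V) (x : V) : ℕ := {y | H.Adj x y}.ncard

end Hypergraph'

/-- A finitely supported probability function on `V`. -/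
def IsProb {V : Type*} (μ : V → ℝ) : Prop :=
  (∀ v, 0 ≤ μ v) ∧ (Function.support μ).Finite ∧ ∑' v, μ v = 1

/-- A coupling of two probability functions. -/
def IsCoupling {V : Type*} (π : V → V → ℝ) (μ ν : V → ℝ) : Prop :=
  (∀ x y, 0 ≤ π x y) ∧ (∀ x, ∑' y, π x y = μ x) ∧ (∀ y, ∑' x, π x y = ν y)

/-- The L¹-Wasserstein distance with respect to the graph distance of `H`. -/
def W1 {V : Type*} (H : Hypergraph' V) (μ ν : V → ℝ) : ℝ :=
  sInf {c | ∃ π, IsCoupling π μ ν ∧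
    c = ∑' p : V × V, (H.dist p.1 p.2 : ℝ) * π p.1 p.2}

/-- A sequence of probability measures from `μ` to `ν` each of whose increments
is supported in a single hyperedge. -/
def WhAdmissible {V : Type*} (H : Hypergraph' V) (μ ν : V → ℝ) (I : ℕ)
    (ξ : ℕ → V → ℝ) : Prop :=
  ξ 0 = μ ∧ ξ I = ν ∧ (∀ i ≤ I, IsProb (ξ i)) ∧
    ∀ i < I, ∃ e ∈ H.E, Function.support (fun v => ξ (i + 1) v - ξ i v) ⊆ e

/-- The new transport distance `W_h`. -/
def Wh {V : Type*} (H : Hypergraph' V) (h : ℝ → ℝ) (μ ν : V → ℝ) : ℝ :=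
  sInf {c | ∃ I ξ, WhAdmissible H μ ν I ξ ∧
    c = ∑ i ∈ Finset.range I, h (W1 H (ξ i) (ξ (i + 1)))}

/-- Assumptions on the concave cost function `h`, with one-sided derivatives
`D0 = h'(0)` and `D1 = h'(1)`. -/
structure CostFn (h : ℝ → ℝ) (D0 D1 : ℝ) : Prop where
  nonneg : ∀ x ∈ Set.Icc (0 : ℝ) 1, 0 ≤ h x
  mono : MonotoneOn h (Set.Icc (0 : ℝ) 1)
  cont : ContinuousOn h (Set.Icc (0 : ℝ) 1)
  concave : ConcaveOn ℝ (Set.Icc (0 : ℝ) 1) h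
  zero : h 0 = 0
  d0_pos : 0 < D0
  d0 : Filter.Tendsto (fun t => h t / t) (nhdsWithin 0 (Set.Ioi 0)) (nhds D0)
  d1 : Filter.Tendsto (fun t => (h 1 - h t) / (1 - t))
    (nhdsWithin 1 (Set.Iio 1)) (nhds D1)

/-- The Dirac measure at a point, as a probability function. -/
def dirac {V : Type*} (x : V) : V → ℝ := fun v => if v = x then 1 else 0

/-- The `α`-lazy uniform random walk at `x`. -/
def rw {V : Type*} (H : Hypergraph' V) (α : ℝ) (x : V) : V → ℝ :=
  fun v => if v = x then α else if H.Adj x v then (1 - α) / (H.degree x) else 0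

/-- The `(α,h)`-Ollivier–Ricci curvature. -/
def ORic {V : Type*} (H : Hypergraph' V) (h : ℝ → ℝ) (α : ℝ) (x y : V) : ℝ :=
  1 - Wh H h (rw H α x) (rw H α y) / Wh H h (dirac x) (dirac y)

/-- The `h`-LLY–Ricci curvature. -/
def hLLY {V : Type*} (H : Hypergraph' V) (h : ℝ → ℝ) (x y : V) : ℝ :=
  Filter.liminf (fun α => ORic H h α x y / (1 - α)) (nhdsWithin 1 (Set.Iio 1))

end

/-!
Along a geodesic `x = f 0, …, f d = y` the curvature bound gives, for `b < κ` and `α` close to `1`,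
`W_h(m_{f i}, m_{f (i+1)}) ≤ (1 - b (1 - α)) h(1)` on every edge, hence by the triangle inequality
`W_h(m_x, m_y) ≤ d (1 - b (1 - α)) h(1)`. For the lower bound, a step of an admissible sequence
lies in one hyperedge, whose vertices sit at two consecutive distances from `x`; so it changes the
mass beyond only one distance `k`, by at most its `W_1` cost. Summing over the cuts `k = 1, …, d`
and using subadditivity of `h` gives `W_h(m_x, m_y) ≥ 2 h(α) + (d - 2) h(1)` (or `h(2α - 1)` when
`d = 1`). Comparing the two bounds and letting `α → 1` yields `b d h(1) ≤ 2 h'(1)`.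
-/

open Finset Topology Hypergraph'

def seqAppend {α : Type*} (ξ : ℕ → α) (I : ℕ) (ζ : ℕ → α) : ℕ → α :=
  fun i => if i ≤ I then ξ i else ζ (i - I)

theorem seqAppend_of_le {α : Type*} {ξ ζ : ℕ → α} {I i : ℕ} (hi : i ≤ I) :
    seqAppend ξ I ζ i = ξ i :=
  if_pos hi

theorem seqAppend_add {α : Type*} {ξ ζ : ℕ → α} {I : ℕ} (hjoin : ξ I = ζ 0) (j : ℕ) :
    seqAppend ξ I ζ (I + j) = ζ j := by
  rcases j.eq_zero_or_pos with rfl | hj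
  · simpa [seqAppend] using hjoin
  · simp [seqAppend, hj.ne']

theorem seqAppend_step {α : Type*} {ξ ζ : ℕ → α} {I J : ℕ} (hjoin : ξ I = ζ 0)
    (P : α → α → Prop) (hξ : ∀ i < I, P (ξ i) (ξ (i + 1))) (hζ : ∀ j < J, P (ζ j) (ζ (j + 1)))
    {i : ℕ} (hi : i < I + J) : P (seqAppend ξ I ζ i) (seqAppend ξ I ζ (i + 1)) := by
  rcases lt_or_ge i I with hiI | hiI
  · rw [seqAppend_of_le hiI.le, seqAppend_of_le hiI]
    exact hξ i hiI
  · obtain ⟨j, rfl⟩ := Nat.exists_eq_add_of_le hiI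
    rw [seqAppend_add hjoin, add_assoc, seqAppend_add hjoin]
    exact hζ j (by omega)

theorem sum_range_seqAppend {α : Type*} {ξ ζ : ℕ → α} {I : ℕ} (hjoin : ξ I = ζ 0) (J : ℕ)
    (g : α → α → ℝ) :
    ∑ i ∈ range (I + J), g (seqAppend ξ I ζ i) (seqAppend ξ I ζ (i + 1)) =
      ∑ i ∈ range I, g (ξ i) (ξ (i + 1)) + ∑ j ∈ range J, g (ζ j) (ζ (j + 1)) := by
  rw [sum_range_add]
  congr 1
  · refine sum_congr rfl fun i hi => ?_
    rw [seqAppend_of_le (mem_range.mp hi).le, seqAppend_of_le (mem_range.mp hi)]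
  · refine sum_congr rfl fun j _ => ?_
    rw [seqAppend_add hjoin, add_assoc, seqAppend_add hjoin]

namespace Hypergraph'

variable {V : Type*} {H : Hypergraph' V} {x y z : V}

theorem isPath_zero (H : Hypergraph' V) (x : V) : H.IsPath x x 0 :=
  ⟨fun _ => x, rfl, rfl, by omega⟩

theorem IsPath.append {m n : ℕ} (h₁ : H.IsPath x y m) (h₂ : H.IsPath y z n) :
    H.IsPath x z (m + n) := by
  obtain ⟨f, hf0, hfm, hf⟩ := h₁
  obtain ⟨g, hg0, hgn, hg⟩ := h₂
  have hjoin : f m = g 0 := hfm.trans hg0.symm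
  exact ⟨seqAppend f m g, by rw [seqAppend_of_le (Nat.zero_le m), hf0],
    by rw [seqAppend_add hjoin, hgn], fun i hi =>
      seqAppend_step hjoin (fun u v => ∃ e ∈ H.E, u ∈ e ∧ v ∈ e) hf hg hi⟩

theorem IsPath.reverse {n : ℕ} (h : H.IsPath x y n) : H.IsPath y x n := by
  obtain ⟨f, hf0, hfn, hstep⟩ := h
  refine ⟨fun i => f (n - i), by simpa using hfn, by simpa using hf0, fun i hi => ?_⟩
  obtain ⟨e, he, h₁, h₂⟩ := hstep (n - (i + 1)) (by omega)
  rw [show n - (i + 1) + 1 = n - i by omega] at h₂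
  exact ⟨e, he, h₂, h₁⟩

theorem dist_comm (H : Hypergraph' V) (x y : V) : H.dist x y = H.dist y x :=
  congrArg sInf (Set.ext fun _ => ⟨IsPath.reverse, IsPath.reverse⟩)

theorem IsPath.dist_le {n : ℕ} (h : H.IsPath x y n) : H.dist x y ≤ n := Nat.sInf_le h

theorem Connected.isPath_dist (hconn : H.Connected) (x y : V) : H.IsPath x y (H.dist x y) :=
  Nat.sInf_mem (hconn x y)

theorem dist_triangle (hconn : H.Connected) (x y z : V) :
    H.dist x z ≤ H.dist x y + H.dist y z :=
  ((hconn.isPath_dist x y).append (hconn.isPath_dist y z)).dist_le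

@[simp]
theorem dist_self (H : Hypergraph' V) (x : V) : H.dist x x = 0 :=
  Nat.le_zero.mp (H.isPath_zero x).dist_le

theorem dist_pos (hconn : H.Connected) (hxy : x ≠ y) : 0 < H.dist x y := by
  obtain ⟨f, hf0, hfd, -⟩ := hconn.isPath_dist x y
  refine Nat.pos_of_ne_zero fun hd => hxy ?_
  rw [← hf0, ← hfd, hd]

theorem dist_le_one_of_mem {e : Set V} (he : e ∈ H.E) (hx : x ∈ e) (hy : y ∈ e) :
    H.dist x y ≤ 1 :=
  IsPath.dist_le ⟨fun i => if i = 0 then x else y, rfl, rfl, fun i hi => by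
    obtain rfl : i = 0 := by omega
    exact ⟨e, he, by simpa using hx, by simpa using hy⟩⟩

theorem Adj.symm (h : H.Adj x y) : H.Adj y x := by
  obtain ⟨hne, e, he, hx, hy⟩ := h
  exact ⟨hne.symm, e, he, hy, hx⟩

theorem Connected.exists_geodesic (hconn : H.Connected) (x y : V) :
    ∃ f : ℕ → V, f 0 = x ∧ f (H.dist x y) = y ∧ ∀ i < H.dist x y, H.Adj (f i) (f (i + 1)) := by
  obtain ⟨f, hf0, hfd, hstep⟩ := hconn.isPath_dist x y
  refine ⟨f, hf0, hfd, fun i hi => ?_⟩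
  obtain ⟨e, he, hi₁, hi₂⟩ := hstep i hi
  refine ⟨fun heq => ?_, e, he, hi₁, hi₂⟩
  -- a repeated vertex could be dropped, giving a shorter path
  have hpre : H.IsPath x (f i) i := ⟨f, hf0, rfl, fun j hj => hstep j (by omega)⟩
  have hsuf : H.IsPath (f (i + 1)) y (H.dist x y - (i + 1)) :=
    ⟨fun j => f (i + 1 + j), rfl,
      by dsimp only; rw [show i + 1 + (H.dist x y - (i + 1)) = H.dist x y by omega, hfd],
      fun j hj => by simpa [add_assoc] using hstep (i + 1 + j) (by omega)⟩
  rw [heq] at hpre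
  have := (hpre.append hsuf).dist_le
  omega

end Hypergraph'

theorem isProb_dirac {V : Type*} (x : V) : IsProb (dirac x) := by
  refine ⟨fun v => by unfold dirac; split_ifs <;> norm_num, (finite_singleton x).subset ?_,
    tsum_ite_eq x 1⟩
  intro v hv
  by_contra hvx
  exact hv (if_neg hvx)

section Finite

variable {V : Type*} [Fintype V] {H : Hypergraph' V} {μ ν : V → ℝ}

theorem isProb_iff : IsProb μ ↔ (∀ v, 0 ≤ μ v) ∧ ∑ v, μ v = 1 := by
  simp [IsProb, tsum_fintype, Set.toFinite]

theorem IsProb.sum_eq_one (hμ : IsProb μ) : ∑ v, μ v = 1 := (isProb_iff.mp hμ).2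

theorem IsProb.apply_le_one (hμ : IsProb μ) (v : V) : μ v ≤ 1 :=
  hμ.sum_eq_one ▸ single_le_sum (fun w _ => hμ.1 w) (Finset.mem_univ v)

theorem isCoupling_iff {π : V → V → ℝ} :
    IsCoupling π μ ν ↔
      (∀ u v, 0 ≤ π u v) ∧ (∀ u, ∑ v, π u v = μ u) ∧ ∀ v, ∑ u, π u v = ν v := by
  simp [IsCoupling, tsum_fintype]

theorem isCoupling_prod (hμ : IsProb μ) (hν : IsProb ν) :
    IsCoupling (fun u v => μ u * ν v) μ ν := by
  refine isCoupling_iff.mpr ⟨fun u v => mul_nonneg (hμ.1 u) (hν.1 v), fun u => ?_, fun v => ?_⟩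
  · rw [← mul_sum, hν.sum_eq_one, mul_one]
  · rw [← sum_mul, hμ.sum_eq_one, one_mul]

/-- Keep the common part `ρ` in place and spread the excess `p` of `μ` proportionally over the
excess `q` of `ν`. -/
theorem isCoupling_diag_add_prod {ρ p q : V → ℝ} (hρ : ∀ v, 0 ≤ ρ v) (hp : ∀ v, 0 ≤ p v)
    (hq : ∀ v, 0 ≤ q v) (hpq : ∑ v, p v = ∑ v, q v) (hμ : ∀ v, μ v = ρ v + p v)
    (hν : ∀ v, ν v = ρ v + q v) :
    IsCoupling (fun u v => (if u = v then ρ u else 0) + p u * q v / ∑ w, p w) μ ν := by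
  set s := ∑ w, p w
  have hs : 0 ≤ s := sum_nonneg fun w _ => hp w
  have hcancel : ∀ {r : V → ℝ}, (∀ v, 0 ≤ r v) → ∑ w, r w = s → ∀ u, r u * s / s = r u := by
    intro r hr hrs u
    rcases eq_or_ne s 0 with h0 | h0
    · rw [← hrs] at h0
      simp [(sum_eq_zero_iff_of_nonneg fun w _ => hr w).mp h0 u (Finset.mem_univ u)]
    · rw [mul_div_assoc, div_self h0, mul_one]
  refine isCoupling_iff.mpr ⟨fun u v => ?_, fun u => ?_, fun v => ?_⟩
  · have := div_nonneg (mul_nonneg (hp u) (hq v)) hs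
    split_ifs <;> linarith [hρ u]
  · simp only [sum_add_distrib, sum_ite_eq, Finset.mem_univ, if_true, ← sum_div, ← mul_sum, ← hpq]
    rw [hcancel hp rfl, hμ]
  · simp only [sum_add_distrib, sum_ite_eq', Finset.mem_univ, if_true, ← sum_div, ← sum_mul]
    rw [mul_comm, hcancel hq hpq.symm, hν]

theorem W1_le_of_isCoupling {π : V → V → ℝ} (hπ : IsCoupling π μ ν) :
    W1 H μ ν ≤ ∑ u, ∑ v, (H.dist u v : ℝ) * π u v := by
  rw [← Fintype.sum_prod_type', ← tsum_fintype (L := .unconditional _)]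
  refine csInf_le ⟨0, ?_⟩ ⟨π, hπ, rfl⟩
  rintro _ ⟨π', hπ', rfl⟩
  exact tsum_nonneg fun p => mul_nonneg (Nat.cast_nonneg _) (hπ'.1 _ _)

/-- Weak Kantorovich duality. -/
theorem sub_le_W1 (hμ : IsProb μ) (hν : IsProb ν) (f : V → ℝ)
    (hf : ∀ u v, f v - f u ≤ H.dist u v) :
    ∑ v, f v * ν v - ∑ u, f u * μ u ≤ W1 H μ ν := by
  refine le_csInf ⟨_, _, isCoupling_prod hμ hν, rfl⟩ ?_
  rintro _ ⟨π, hπ, rfl⟩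
  obtain ⟨hπ0, hrow, hcol⟩ := isCoupling_iff.mp hπ
  calc ∑ v, f v * ν v - ∑ u, f u * μ u
      = ∑ u, ∑ v, (f v - f u) * π u v := by
        simp only [← hrow, ← hcol, mul_sum, sub_mul, sum_sub_distrib]
        rw [sum_comm]
    _ ≤ ∑ u, ∑ v, (H.dist u v : ℝ) * π u v :=
        sum_le_sum fun u _ => sum_le_sum fun v _ => mul_le_mul_of_nonneg_right (hf u v) (hπ0 u v)
    _ = _ := by rw [← Fintype.sum_prod_type', tsum_fintype]

theorem W1_nonneg (hμ : IsProb μ) (hν : IsProb ν) : 0 ≤ W1 H μ ν := by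
  simpa using sub_le_W1 (H := H) hμ hν 0 fun u v => by simp

theorem W1_le_one_of_support_subset {e : Set V} (hμ : IsProb μ) (hν : IsProb ν)
    (hsupp : Function.support (fun v => ν v - μ v) ⊆ e) (he : ∀ u ∈ e, ∀ v ∈ e, H.dist u v ≤ 1) :
    W1 H μ ν ≤ 1 := by
  set ρ : V → ℝ := fun v => min (μ v) (ν v)
  set p : V → ℝ := fun v => μ v - ρ v
  set q : V → ℝ := fun v => ν v - ρ v
  have hp : ∀ v, 0 ≤ p v := fun v => sub_nonneg.mpr (min_le_left _ _)
  have hq : ∀ v, 0 ≤ q v := fun v => sub_nonneg.mpr (min_le_right _ _)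
  have hpe : ∀ v ∉ e, p v = 0 := fun v hv => by
    have : ν v = μ v := sub_eq_zero.mp (Function.notMem_support.mp fun h => hv (hsupp h))
    simp [p, ρ, this]
  have hqe : ∀ v ∉ e, q v = 0 := fun v hv => by
    have : ν v = μ v := sub_eq_zero.mp (Function.notMem_support.mp fun h => hv (hsupp h))
    simp [q, ρ, this]
  have hpq : ∑ v, p v = ∑ v, q v := by
    simp only [p, q, sum_sub_distrib, hμ.sum_eq_one, hν.sum_eq_one]
  set s := ∑ v, p v
  have hs1 : s ≤ 1 := by
    rw [← hμ.sum_eq_one]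
    exact sum_le_sum fun v _ => sub_le_self _ (le_min (hμ.1 v) (hν.1 v))
  refine (W1_le_of_isCoupling (isCoupling_diag_add_prod (fun v => le_min (hμ.1 v) (hν.1 v))
    hp hq hpq (fun v => by ring) (fun v => by ring))).trans ?_
  have hpoint : ∀ u v, (H.dist u v : ℝ) * ((if u = v then ρ u else 0) + p u * q v / s)
      ≤ p u * q v / s := by
    intro u v
    have hpqs : 0 ≤ p u * q v / s :=
      div_nonneg (mul_nonneg (hp u) (hq v)) (sum_nonneg fun w _ => hp w)
    by_cases huv : u = v
    · subst huv
      simpa using hpqs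
    rw [if_neg huv, zero_add]
    by_cases hmem : u ∈ e ∧ v ∈ e
    · exact mul_le_of_le_one_left hpqs (by exact_mod_cast he u hmem.1 v hmem.2)
    · rcases not_and_or.mp hmem with hu | hv
      · simp [hpe u hu]
      · simp [hqe v hv]
  calc ∑ u, ∑ v, (H.dist u v : ℝ) * ((if u = v then ρ u else 0) + p u * q v / s)
      ≤ ∑ u, ∑ v, p u * q v / s := sum_le_sum fun u _ => sum_le_sum fun v _ => hpoint u v
    _ = s * s / s := by simp only [← sum_div, ← mul_sum, ← sum_mul, ← hpq, s]
    _ ≤ 1 := by rw [mul_self_div_self]; exact hs1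

end Finite

/-- On an infinite vertex set, adding the non-summable mass `1` on all pairs outside the supports
gives a coupling whose row sums, column sums and cost all take the junk value `0` of `tsum`. -/
theorem W1_eq_zero_of_infinite {V : Type*} [Infinite V] {H : Hypergraph' V}
    (hconn : H.Connected) {μ ν : V → ℝ} (hμ : IsProb μ) (hν : IsProb ν) : W1 H μ ν = 0 := by
  set A := (Function.support μ ∪ Function.support ν)ᶜ
  have hA : A.Infinite := (hμ.2.1.union hν.2.1).infinite_compl
  have : Infinite A := hA.to_subtype
  have hμA : ∀ u ∈ A, μ u = 0 := fun u hu => Function.notMem_support.mp fun h => hu (Or.inl h)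
  have hνA : ∀ v ∈ A, ν v = 0 := fun v hv => Function.notMem_support.mp fun h => hv (Or.inr h)
  have hjunk : ∑' v, A.indicator (fun _ => (1 : ℝ)) v = 0 := by
    rw [← _root_.tsum_subtype, tsum_const, Nat.card_eq_zero_of_infinite, zero_smul]
  set π : V → V → ℝ := fun u v => μ u * ν v + if u ∈ A ∧ v ∈ A then 1 else 0
  have hπ : IsCoupling π μ ν := by
    refine ⟨fun u v => add_nonneg (mul_nonneg (hμ.1 u) (hν.1 v)) (by split_ifs <;> norm_num),
      fun u => ?_, fun v => ?_⟩
    · by_cases hu : u ∈ A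
      · simpa [π, hu, hμA u hu, Set.indicator] using hjunk
      · simp only [π, hu, false_and, if_false, add_zero, tsum_mul_left, hν.2.2, mul_one]
    · by_cases hv : v ∈ A
      · simpa [π, hv, hνA v hv, Set.indicator] using hjunk
      · simp only [π, hv, and_false, if_false, add_zero, tsum_mul_right, hμ.2.2, one_mul]
  obtain ⟨a, ha⟩ := hA.nonempty
  have hcost : ¬ Summable fun p : V × V => (H.dist p.1 p.2 : ℝ) * π p.1 p.2 := by
    intro hsum
    have : Infinite {v // v ∈ A ∧ v ≠ a} := (hA.sdiff (finite_singleton a)).to_subtype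
    have hinj : Function.Injective fun v : {v // v ∈ A ∧ v ≠ a} => ((a, (v : V)) : V × V) :=
      fun v w h => Subtype.ext (Prod.ext_iff.mp h).2
    refine (summable_const_iff (1 : ℝ)).not.mpr one_ne_zero
      (Summable.of_nonneg_of_le (fun _ => zero_le_one) (fun v => ?_) (hsum.comp_injective hinj))
    have hd : (1 : ℝ) ≤ H.dist a v := by exact_mod_cast dist_pos hconn v.2.2.symm
    have hπ1 : 1 ≤ π a v := by simp [π, ha, v.2.1, mul_nonneg (hμ.1 a) (hν.1 v)]
    simpa using one_le_mul_of_one_le_of_one_le hd hπ1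
  have hnonneg : ∀ c ∈ {c | ∃ π, IsCoupling π μ ν ∧
      c = ∑' p : V × V, (H.dist p.1 p.2 : ℝ) * π p.1 p.2}, 0 ≤ c := by
    rintro _ ⟨π', hπ', rfl⟩
    exact tsum_nonneg fun p => mul_nonneg (Nat.cast_nonneg _) (hπ'.1 _ _)
  have hmem : (0 : ℝ) ∈ {c | ∃ π, IsCoupling π μ ν ∧
      c = ∑' p : V × V, (H.dist p.1 p.2 : ℝ) * π p.1 p.2} :=
    ⟨π, hπ, (tsum_eq_zero_of_not_summable hcost).symm⟩
  exact le_antisymm (csInf_le ⟨0, hnonneg⟩ hmem) (le_csInf ⟨0, hmem⟩ hnonneg)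

namespace CostFn

variable {h : ℝ → ℝ} {D0 D1 : ℝ}

theorem mul_le_map_mul (hc : CostFn h D0 D1) {t x : ℝ} (ht : t ∈ Icc (0 : ℝ) 1)
    (hx : x ∈ Icc (0 : ℝ) 1) : t * h x ≤ h (t * x) := by
  simpa [hc.zero] using
    hc.concave.2 (left_mem_Icc.mpr zero_le_one) hx (sub_nonneg.mpr ht.2) ht.1 (by ring)

theorem map_add_le (hc : CostFn h D0 D1) {a b : ℝ} (ha : 0 ≤ a) (hb : 0 ≤ b) (hab : a + b ≤ 1) :
    h (a + b) ≤ h a + h b := by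
  rcases (add_nonneg ha hb).eq_or_lt with hs | hs
  · obtain ⟨rfl, rfl⟩ : a = 0 ∧ b = 0 := ⟨by linarith, by linarith⟩
    simp [hc.zero]
  have hmem : a + b ∈ Icc (0 : ℝ) 1 := ⟨hs.le, hab⟩
  have hfrac : ∀ c, 0 ≤ c → c ≤ a + b → c / (a + b) * h (a + b) ≤ h c := fun c hc0 hcs => by
    simpa [div_mul_cancel₀ c hs.ne'] using
      hc.mul_le_map_mul ⟨div_nonneg hc0 hs.le, (div_le_one hs).mpr hcs⟩ hmem
  have := add_le_add (hfrac a ha (by linarith)) (hfrac b hb (by linarith))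
  rwa [← add_mul, ← add_div, div_self hs.ne', one_mul] at this

theorem map_le_sum (hc : CostFn h D0 D1) {ι : Type*} (T : Finset ι) (w : ι → ℝ)
    (hw : ∀ i ∈ T, w i ∈ Icc (0 : ℝ) 1) {c : ℝ} (hc01 : c ∈ Icc (0 : ℝ) 1)
    (hcw : c ≤ ∑ i ∈ T, w i) : h c ≤ ∑ i ∈ T, h (w i) := by
  induction T using Finset.induction_on generalizing c with
  | empty =>
    obtain rfl : c = 0 := le_antisymm (by simpa using hcw) hc01.1
    simp [hc.zero]
  | insert a T ha ih =>
    rw [sum_insert ha] at hcw ⊢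
    have hwa := hw a (mem_insert_self a T)
    have hwT : ∀ i ∈ T, w i ∈ Icc (0 : ℝ) 1 := fun i hi => hw i (mem_insert_of_mem hi)
    have hT : 0 ≤ ∑ i ∈ T, h (w i) := sum_nonneg fun i hi => hc.nonneg _ (hwT i hi)
    rcases le_or_gt c (w a) with hca | hca
    · linarith [hc.mono hc01 hwa hca]
    · have hrest := ih hwT (c := c - w a) ⟨by linarith, by linarith [hwa.1, hc01.2]⟩ (by linarith)
      have := hc.map_add_le hwa.1 (sub_nonneg.mpr hca.le) (by linarith [hc01.2])
      rw [add_sub_cancel] at this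
      linarith

theorem map_one_pos (hc : CostFn h D0 D1) : 0 < h 1 := by
  obtain ⟨t, ht0, ht1, hht⟩ : ∃ t, 0 < t ∧ t < 1 ∧ 0 < h t / t :=
    (show ∀ᶠ t in 𝓝[>] (0 : ℝ), 0 < t ∧ t < 1 ∧ 0 < h t / t by
      filter_upwards [self_mem_nhdsWithin, nhdsWithin_le_nhds (eventually_lt_nhds one_pos),
        hc.d0.eventually (eventually_gt_nhds hc.d0_pos)] with t h0 h1 h2 using ⟨h0, h1, h2⟩).exists
  exact ((div_pos_iff_of_pos_right ht0).mp hht).trans_le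
    (hc.mono ⟨ht0.le, ht1.le⟩ (right_mem_Icc.mpr zero_le_one) ht1.le)

theorem D1_nonneg (hc : CostFn h D0 D1) : 0 ≤ D1 := by
  refine ge_of_tendsto hc.d1 ?_
  filter_upwards [self_mem_nhdsWithin, nhdsWithin_le_nhds (eventually_gt_nhds one_pos)]
    with t (ht1 : t < 1) ht0
  exact div_nonneg (sub_nonneg.mpr (hc.mono ⟨ht0.le, ht1.le⟩ (right_mem_Icc.mpr zero_le_one)
    ht1.le)) (sub_nonneg.mpr ht1.le)

theorem tendsto_slope_two_mul_sub_one (hc : CostFn h D0 D1) :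
    Tendsto (fun α => (h 1 - h (2 * α - 1)) / (1 - α)) (𝓝[<] 1) (𝓝 (2 * D1)) := by
  have hlin : Tendsto (fun α : ℝ => 2 * α - 1) (𝓝[<] 1) (𝓝[<] 1) := by
    refine tendsto_nhdsWithin_of_tendsto_nhds_of_eventually_within _ ?_ ?_
    · exact ((continuous_const.mul continuous_id).sub continuous_const).tendsto' 1 1 (by norm_num)
        |>.mono_left nhdsWithin_le_nhds
    · filter_upwards [self_mem_nhdsWithin] with α (hα : α < 1)
      show 2 * α - 1 < 1
      linarith
  refine ((hc.d1.comp hlin).const_mul 2).congr fun α => ?_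
  simp only [Function.comp_apply]
  rw [show 1 - (2 * α - 1) = 2 * (1 - α) by ring, ← mul_div_assoc, mul_div_mul_left _ _ two_ne_zero]

end CostFn

section Admissible

variable {V : Type*} {H : Hypergraph' V} {μ ρ ν : V → ℝ}

theorem WhAdmissible.append {I J : ℕ} {ξ ζ : ℕ → V → ℝ} (h₁ : WhAdmissible H μ ρ I ξ)
    (h₂ : WhAdmissible H ρ ν J ζ) : WhAdmissible H μ ν (I + J) (seqAppend ξ I ζ) := by
  obtain ⟨hξ0, hξI, hξp, hξs⟩ := h₁
  obtain ⟨hζ0, hζJ, hζp, hζs⟩ := h₂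
  have hjoin : ξ I = ζ 0 := hξI.trans hζ0.symm
  refine ⟨by rw [seqAppend_of_le (Nat.zero_le I), hξ0], by rw [seqAppend_add hjoin, hζJ],
    fun i hi => ?_, fun i hi => seqAppend_step hjoin
      (fun p q => ∃ e ∈ H.E, Function.support (fun v => q v - p v) ⊆ e) hξs hζs hi⟩
  rcases le_or_gt i I with hiI | hiI
  · rw [seqAppend_of_le hiI]
    exact hξp i hiI
  · obtain ⟨j, rfl⟩ := Nat.exists_eq_add_of_le hiI.le
    rw [seqAppend_add hjoin]
    exact hζp j (by omega)

theorem WhAdmissible.reverse {I : ℕ} {ξ : ℕ → V → ℝ} (hξ : WhAdmissible H μ ν I ξ) :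
    WhAdmissible H ν μ I (fun i => ξ (I - i)) := by
  obtain ⟨hξ0, hξI, hξp, hξs⟩ := hξ
  refine ⟨by simpa using hξI, by simpa using hξ0, fun i _ => hξp _ (Nat.sub_le I i),
    fun i hi => ?_⟩
  obtain ⟨e, he, hsupp⟩ := hξs (I - (i + 1)) (by omega)
  refine ⟨e, he, fun v hv => hsupp ?_⟩
  rw [show I - (i + 1) + 1 = I - i by omega, Function.mem_support] at *
  exact fun h => hv (by linarith)

noncomputable def moveMass (μ : V → ℝ) (a c : V) : V → ℝ :=
  fun w => μ w + μ a * (dirac c w - dirac a w)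

theorem isProb_moveMass [Fintype V] (hμ : IsProb μ) (a c : V) : IsProb (moveMass μ a c) := by
  refine isProb_iff.mpr ⟨fun w => ?_, ?_⟩
  · have hc : 0 ≤ μ a * dirac c w := mul_nonneg (hμ.1 a) (by unfold dirac; split_ifs <;> norm_num)
    have hrest : 0 ≤ μ w - μ a * dirac a w := by
      by_cases hw : w = a
      · simp [dirac, hw]
      · simp [dirac, hw, hμ.1 w]
    simp only [moveMass]
    linarith
  · simp [moveMass, dirac, sum_add_distrib, mul_sub, sum_sub_distrib, hμ.sum_eq_one]

theorem exists_whAdmissible_moveMass [Fintype V] {a c : V} {L : ℕ} (hp : H.IsPath a c L)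
    (hμ : IsProb μ) : ∃ ξ, WhAdmissible H μ (moveMass μ a c) L ξ := by
  obtain ⟨f, hf0, hfL, hstep⟩ := hp
  refine ⟨fun t => moveMass μ a (f (min t L)), ?_, by simp [hfL],
    fun t _ => isProb_moveMass hμ _ _, fun t ht => ?_⟩
  · funext w
    simp [moveMass, hf0]
  obtain ⟨e, he, ht₁, ht₂⟩ := hstep t ht
  refine ⟨e, he, fun w hw => ?_⟩
  rw [Function.mem_support] at hw
  simp only [min_eq_left ht.le, min_eq_left (Nat.succ_le_of_lt ht)] at hw
  by_contra hwe
  have h₁ : w ≠ f t := fun h => hwe (h ▸ ht₁)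
  have h₂ : w ≠ f (t + 1) := fun h => hwe (h ▸ ht₂)
  exact hw (by simp [moveMass, dirac, h₁, h₂])

theorem exists_whAdmissible_dirac [Fintype V] (hconn : H.Connected) (x₀ : V) (hμ : IsProb μ) :
    ∃ I ξ, WhAdmissible H μ (dirac x₀) I ξ := by
  suffices ∀ (S : Finset V) (μ : V → ℝ), IsProb μ → (∀ v, μ v ≠ 0 → v = x₀ ∨ v ∈ S) →
      ∃ I ξ, WhAdmissible H μ (dirac x₀) I ξ from
    this univ μ hμ fun v _ => Or.inr (Finset.mem_univ v)
  intro S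
  induction S using Finset.induction_on with
  | empty =>
    intro μ hμ hsupp
    have hzero : ∀ v, v ≠ x₀ → μ v = 0 := fun v hv => by
      by_contra h
      simpa [hv] using hsupp v h
    have hx₀ : μ x₀ = 1 := by
      rw [← hμ.sum_eq_one, sum_eq_single x₀ (fun v _ hv => hzero v hv) (by simp)]
    have hμδ : μ = dirac x₀ := funext fun v => by
      by_cases hv : v = x₀
      · simp [dirac, hv, hx₀]
      · simp [dirac, hv, hzero v hv]
    exact ⟨0, fun _ => μ, rfl, hμδ, fun _ _ => hμ, fun _ h => absurd h (Nat.not_lt_zero _)⟩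
  | insert a S _ ih =>
    intro μ hμ hsupp
    obtain ⟨ξ, hξ⟩ := exists_whAdmissible_moveMass (hconn.isPath_dist a x₀) hμ
    obtain ⟨J, ζ, hζ⟩ := ih _ (isProb_moveMass hμ a x₀) fun v hv => by
      by_cases hvx : v = x₀
      · exact Or.inl hvx
      by_cases hva : v = a
      · subst hva
        simp [moveMass, dirac, hvx] at hv
      · have : μ v ≠ 0 := by simpa [moveMass, dirac, hvx, hva] using hv
        simpa [hvx, hva] using hsupp v this
    exact ⟨_, _, hξ.append hζ⟩

theorem exists_whAdmissible [Fintype V] (hconn : H.Connected) (hμ : IsProb μ) (hν : IsProb ν) :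
    ∃ I ξ, WhAdmissible H μ ν I ξ := by
  have : Nonempty V := by
    by_contra hV
    have := hμ.sum_eq_one
    simp [not_nonempty_iff.mp hV] at this
  obtain ⟨x₀⟩ := this
  obtain ⟨I, ξ, hξ⟩ := exists_whAdmissible_dirac hconn x₀ hμ
  obtain ⟨J, ζ, hζ⟩ := exists_whAdmissible_dirac hconn x₀ hν
  exact ⟨_, _, hξ.append hζ.reverse⟩

theorem WhAdmissible.W1_mem_Icc [Fintype V] {I : ℕ} {ξ : ℕ → V → ℝ}
    (hξ : WhAdmissible H μ ν I ξ) {i : ℕ} (hi : i < I) :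
    W1 H (ξ i) (ξ (i + 1)) ∈ Icc (0 : ℝ) 1 := by
  obtain ⟨e, he, hsupp⟩ := hξ.2.2.2 i hi
  have hp := hξ.2.2.1 i hi.le
  have hp' := hξ.2.2.1 (i + 1) hi
  exact ⟨W1_nonneg hp hp', W1_le_one_of_support_subset hp hp' hsupp
    fun u hu v hv => dist_le_one_of_mem he hu hv⟩

end Admissible

section Transport

variable {V : Type*} [Fintype V] {H : Hypergraph' V} {h : ℝ → ℝ} {μ ρ ν : V → ℝ}

theorem WhAdmissible.cost_nonneg (hh : ∀ t ∈ Icc (0 : ℝ) 1, 0 ≤ h t) {I : ℕ} {ξ : ℕ → V → ℝ}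
    (hξ : WhAdmissible H μ ν I ξ) : 0 ≤ ∑ i ∈ range I, h (W1 H (ξ i) (ξ (i + 1))) :=
  sum_nonneg fun _ hi => hh _ (hξ.W1_mem_Icc (mem_range.mp hi))

theorem Wh_le (hh : ∀ t ∈ Icc (0 : ℝ) 1, 0 ≤ h t) {I : ℕ} {ξ : ℕ → V → ℝ}
    (hξ : WhAdmissible H μ ν I ξ) : Wh H h μ ν ≤ ∑ i ∈ range I, h (W1 H (ξ i) (ξ (i + 1))) :=
  csInf_le ⟨0, by rintro _ ⟨J, ζ, hζ, rfl⟩; exact hζ.cost_nonneg hh⟩ ⟨I, ξ, hξ, rfl⟩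

theorem le_Wh (hconn : H.Connected) (hμ : IsProb μ) (hν : IsProb ν) {b : ℝ}
    (hb : ∀ I ξ, WhAdmissible H μ ν I ξ → b ≤ ∑ i ∈ range I, h (W1 H (ξ i) (ξ (i + 1)))) :
    b ≤ Wh H h μ ν := by
  obtain ⟨I, ξ, hξ⟩ := exists_whAdmissible hconn hμ hν
  exact le_csInf ⟨_, I, ξ, hξ, rfl⟩ (by rintro _ ⟨J, ζ, hζ, rfl⟩; exact hb J ζ hζ)

theorem Wh_triangle (hconn : H.Connected) (hh : ∀ t ∈ Icc (0 : ℝ) 1, 0 ≤ h t) (hμ : IsProb μ)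
    (hρ : IsProb ρ) (hν : IsProb ν) : Wh H h μ ν ≤ Wh H h μ ρ + Wh H h ρ ν := by
  have hsplit : ∀ I ξ, WhAdmissible H μ ρ I ξ → ∀ J ζ, WhAdmissible H ρ ν J ζ →
      Wh H h μ ν ≤ ∑ i ∈ range I, h (W1 H (ξ i) (ξ (i + 1))) +
        ∑ j ∈ range J, h (W1 H (ζ j) (ζ (j + 1))) := fun I ξ hξ J ζ hζ => by
    rw [← sum_range_seqAppend (hξ.2.1.trans hζ.1.symm) J fun p q => h (W1 H p q)]
    exact Wh_le hh (hξ.append hζ)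
  have : Wh H h μ ν - Wh H h ρ ν ≤ Wh H h μ ρ := le_Wh hconn hμ hρ fun I ξ hξ => by
    have : Wh H h μ ν - ∑ i ∈ range I, h (W1 H (ξ i) (ξ (i + 1))) ≤ Wh H h ρ ν :=
      le_Wh hconn hρ hν fun J ζ hζ => by linarith [hsplit I ξ hξ J ζ hζ]
    linarith
  linarith

theorem Wh_le_sum (hconn : H.Connected) (hh : ∀ t ∈ Icc (0 : ℝ) 1, 0 ≤ h t)
    {μs : ℕ → V → ℝ} {n : ℕ} (hμs : ∀ i ≤ n, IsProb (μs i)) :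
    Wh H h (μs 0) (μs n) ≤ ∑ i ∈ range n, Wh H h (μs i) (μs (i + 1)) := by
  induction n with
  | zero =>
    simpa using Wh_le hh (I := 0) (ξ := fun _ => μs 0)
      ⟨rfl, rfl, fun _ _ => hμs 0 le_rfl, fun _ h => absurd h (Nat.not_lt_zero _)⟩
  | succ n ih =>
    rw [sum_range_succ]
    linarith [ih fun i hi => hμs i (by omega), Wh_triangle hconn hh (hμs 0 (by omega))
      (hμs n (by omega)) (hμs (n + 1) le_rfl)]

end Transport

section TailMass

variable {V : Type*} [Fintype V] {H : Hypergraph' V} {μ ν : V → ℝ}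

noncomputable def tailMass (H : Hypergraph' V) (x : V) (k : ℕ) (μ : V → ℝ) : ℝ :=
  ∑ v with k ≤ H.dist x v, μ v

/-- The vertices of a hyperedge lie at two consecutive distances from `x`. -/
theorem exists_forall_ne_tailMass_eq (hconn : H.Connected) {e : Set V} (he : e ∈ H.E)
    (hsupp : Function.support (fun v => ν v - μ v) ⊆ e) (hsum : ∑ v, ν v = ∑ v, μ v) (x : V) :
    ∃ j, ∀ k ≠ j, tailMass H x k ν = tailMass H x k μ := by
  by_cases hS : ∃ v, ν v ≠ μ v
  swap
  · push Not at hS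
    exact ⟨0, fun k _ => by simp [tailMass, hS]⟩
  obtain ⟨v₀, hv₀, hmin⟩ := exists_min_image (univ.filter fun v => ν v ≠ μ v) (H.dist x)
    (by simpa [Finset.Nonempty] using hS)
  have hband : ∀ v, ν v ≠ μ v → H.dist x v₀ ≤ H.dist x v ∧ H.dist x v ≤ H.dist x v₀ + 1 := by
    intro v hv
    have hmem : ∀ {w}, ν w ≠ μ w → w ∈ e := fun hw => hsupp (sub_ne_zero.mpr hw)
    refine ⟨hmin v (by simpa using hv), (dist_triangle hconn x v₀ v).trans ?_⟩
    have := dist_le_one_of_mem he (hmem (by simpa using hv₀)) (hmem hv)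
    omega
  refine ⟨H.dist x v₀ + 1, fun k hk => ?_⟩
  rw [← sub_eq_zero, tailMass, tailMass, ← sum_sub_distrib, sum_filter]
  rcases Nat.lt_or_ge (H.dist x v₀) k with hk' | hk'
  · refine sum_eq_zero fun v _ => ?_
    by_cases hv : ν v = μ v
    · simp [hv]
    · have := hband v hv
      rw [if_neg (by omega)]
  · have htotal : ∑ v, (ν v - μ v) = 0 := by rw [sum_sub_distrib, hsum, sub_self]
    refine Eq.trans (sum_congr rfl fun v _ => ?_) htotal
    by_cases hv : ν v = μ v
    · simp [hv]
    · rw [if_pos ((hk').trans (hband v hv).1)]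

theorem tailMass_sub_le_W1 (hconn : H.Connected) (hμ : IsProb μ) (hν : IsProb ν) (x : V)
    (k : ℕ) : tailMass H x k ν - tailMass H x k μ ≤ W1 H μ ν := by
  have hlip : ∀ u v, ((if k ≤ H.dist x v then 1 else 0) - if k ≤ H.dist x u then 1 else 0 : ℝ)
      ≤ H.dist u v := by
    intro u v
    have := dist_triangle hconn x u v
    have hd : (0 : ℝ) ≤ H.dist u v := Nat.cast_nonneg _
    split_ifs with hv hu hu
    · linarith
    · have : 1 ≤ H.dist u v := by omega
      simpa using (Nat.one_le_cast.mpr this : (1 : ℝ) ≤ H.dist u v)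
    · linarith
    · linarith
  simpa [tailMass, sum_filter] using sub_le_W1 hμ hν _ hlip

end TailMass

section LowerBound

variable {V : Type*} [Fintype V] {H : Hypergraph' V} {h : ℝ → ℝ} {D0 D1 : ℝ} {μ ν : V → ℝ}

/-- Each step of an admissible sequence moves the mass beyond a single distance `j`, by at most its
`W1` cost; subadditivity of `h` charges each cut `k` to the steps with `j = k`. -/
theorem sum_le_Wh (hconn : H.Connected) (hc : CostFn h D0 D1) (hμ : IsProb μ) (hν : IsProb ν)
    (x : V) (K : Finset ℕ) (c : ℕ → ℝ) (hc01 : ∀ k ∈ K, c k ∈ Icc (0 : ℝ) 1)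
    (hcK : ∀ k ∈ K, c k ≤ tailMass H x k ν - tailMass H x k μ) :
    ∑ k ∈ K, h (c k) ≤ Wh H h μ ν := by
  refine le_Wh hconn hμ hν fun I ξ hξ => ?_
  have hprob : ∀ i < I, IsProb (ξ i) ∧ IsProb (ξ (i + 1)) := fun i hi =>
    ⟨hξ.2.2.1 i hi.le, hξ.2.2.1 (i + 1) hi⟩
  have hstep : ∀ i, ∃ j, i < I → ∀ k ≠ j, tailMass H x k (ξ (i + 1)) = tailMass H x k (ξ i) := by
    intro i
    by_cases hi : i < I
    · obtain ⟨e, he, hsupp⟩ := hξ.2.2.2 i hi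
      obtain ⟨j, hj⟩ := exists_forall_ne_tailMass_eq hconn he hsupp
        (by rw [(hprob i hi).2.sum_eq_one, (hprob i hi).1.sum_eq_one]) x
      exact ⟨j, fun _ => hj⟩
    · exact ⟨0, fun h => absurd h hi⟩
  choose j hj using hstep
  set w : ℕ → ℝ := fun i => W1 H (ξ i) (ξ (i + 1))
  have hfiber : ∀ k ∈ K, h (c k) ≤ ∑ i ∈ range I with j i = k, h (w i) := by
    intro k hk
    refine hc.map_le_sum _ _ (fun i hi => hξ.W1_mem_Icc (mem_range.mp (mem_filter.mp hi).1))
      (hc01 k hk) ?_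
    calc c k ≤ tailMass H x k ν - tailMass H x k μ := hcK k hk
      _ = ∑ i ∈ range I, (tailMass H x k (ξ (i + 1)) - tailMass H x k (ξ i)) := by
        rw [sum_range_sub (fun i => tailMass H x k (ξ i)), hξ.1, hξ.2.1]
      _ = ∑ i ∈ range I with j i = k, (tailMass H x k (ξ (i + 1)) - tailMass H x k (ξ i)) := by
        rw [sum_filter]
        refine sum_congr rfl fun i hi => ?_
        split_ifs with hik
        · rfl
        · rw [hj i (mem_range.mp hi) k (Ne.symm hik), sub_self]
      _ ≤ ∑ i ∈ range I with j i = k, w i := sum_le_sum fun i hi => by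
        have hi' := mem_range.mp (mem_filter.mp hi).1
        exact tailMass_sub_le_W1 hconn (hprob i hi').1 (hprob i hi').2 x k
  calc ∑ k ∈ K, h (c k) ≤ ∑ k ∈ K, ∑ i ∈ range I with j i = k, h (w i) := sum_le_sum hfiber
    _ = ∑ i ∈ range I with j i ∈ K, h (w i) := sum_fiberwise_eq_sum_filter _ _ _ _
    _ ≤ ∑ i ∈ range I, h (w i) := sum_le_sum_of_subset_of_nonneg (filter_subset _ _)
        fun i hi _ => hc.nonneg _ (hξ.W1_mem_Icc (mem_range.mp hi))

theorem le_tailMass (hμ : ∀ v, 0 ≤ μ v) {x y : V} {k : ℕ} (hk : k ≤ H.dist x y) :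
    μ y ≤ tailMass H x k μ :=
  single_le_sum (f := μ) (fun v _ => hμ v) (by simpa using hk)

theorem tailMass_le_one_sub (hμ : IsProb μ) (x : V) {k : ℕ} (hk : 1 ≤ k) :
    tailMass H x k μ ≤ 1 - μ x := by
  rw [← hμ.sum_eq_one, ← sum_erase_eq_sub (Finset.mem_univ x)]
  refine sum_le_sum_of_subset_of_nonneg (fun v hv => ?_) fun v _ _ => hμ.1 v
  refine mem_erase.mpr ⟨fun hvx => ?_, Finset.mem_univ v⟩
  subst hvx
  simp at hv
  omega

theorem tailMass_eq_zero (x : V) {k : ℕ} (hμ : ∀ v, μ v ≠ 0 → H.dist x v < k) :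
    tailMass H x k μ = 0 :=
  sum_eq_zero fun v hv => by_contra fun h => (mem_filter.mp hv).2.not_gt (hμ v h)

theorem tailMass_eq_one (hμ : IsProb μ) (x : V) {k : ℕ} (hk : ∀ v, μ v ≠ 0 → k ≤ H.dist x v) :
    tailMass H x k μ = 1 := by
  rw [← hμ.sum_eq_one, tailMass, sum_filter]
  refine sum_congr rfl fun v _ => ?_
  by_cases hv : μ v = 0
  · simp [hv]
  · rw [if_pos (hk v hv)]

end LowerBound

section RandomWalk

variable {V : Type*} {H : Hypergraph' V} {α : ℝ} {x y : V}

@[simp]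
theorem rw_self : rw H α x x = α := if_pos rfl

theorem dist_le_one_of_rw_ne_zero {v : V} (hv : rw H α x v ≠ 0) : H.dist x v ≤ 1 := by
  by_cases hvx : v = x
  · simp [hvx]
  by_cases hadj : H.Adj x v
  · obtain ⟨-, e, he, hx, hv⟩ := hadj
    exact dist_le_one_of_mem he hx hv
  · simp [rw, hvx, hadj] at hv

theorem isProb_rw [Fintype V] (hα₀ : 0 ≤ α) (hα₁ : α ≤ 1) (hx : ∃ z, H.Adj x z) :
    IsProb (rw H α x) := by
  have hdeg : H.degree x = #(univ.filter (H.Adj x)) := by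
    rw [degree, ← Set.ncard_coe_finset]
    congr 1
    ext
    simp
  have hpos : (0 : ℝ) < H.degree x := by
    obtain ⟨z, hz⟩ := hx
    rw [hdeg, Nat.cast_pos, card_pos]
    exact ⟨z, by simpa using hz⟩
  have hsplit : ∀ v, rw H α x v =
      (if v = x then α else 0) + if H.Adj x v then (1 - α) / H.degree x else 0 := fun v => by
    by_cases hvx : v = x
    · simp [rw, hvx, Adj]
    · simp [rw, hvx]
  refine isProb_iff.mpr ⟨fun v => ?_, ?_⟩
  · rw [hsplit]
    have := div_nonneg (sub_nonneg.mpr hα₁) hpos.le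
    split_ifs <;> linarith
  · simp only [hsplit, sum_add_distrib, sum_ite_eq', Finset.mem_univ, if_true, ← sum_filter,
      sum_const, nsmul_eq_mul, ← hdeg]
    field_simp
    ring

end RandomWalk

section Curvature

variable {V : Type*} {H : Hypergraph' V} {h : ℝ → ℝ} {D0 D1 α : ℝ} {x y : V}

theorem whAdmissible_one {μ ν : V → ℝ} {e : Set V} (he : e ∈ H.E) (hμ : IsProb μ)
    (hν : IsProb ν) (hsupp : Function.support (fun v => ν v - μ v) ⊆ e) :
    WhAdmissible H μ ν 1 (fun i => if i = 0 then μ else ν) :=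
  ⟨rfl, rfl, fun i _ => by dsimp only; split_ifs <;> assumption, fun i hi => by
    obtain rfl : i = 0 := by omega
    exact ⟨e, he, by simpa using hsupp⟩⟩

theorem Wh_dirac_of_adj [Fintype V] (hconn : H.Connected) (hc : CostFn h D0 D1)
    (hxy : H.Adj x y) : Wh H h (dirac x) (dirac y) = h 1 := by
  obtain ⟨hne, e, he, hx, hy⟩ := hxy
  have hsupp : Function.support (fun v => dirac y v - dirac x v) ⊆ e := fun v hv => by
    by_contra hve
    have hvx : v ≠ x := fun h => hve (h ▸ hx)
    have hvy : v ≠ y := fun h => hve (h ▸ hy)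
    simp [dirac, hvx, hvy] at hv
  have hadm := whAdmissible_one he (isProb_dirac x) (isProb_dirac y) hsupp
  refine le_antisymm ((Wh_le hc.nonneg hadm).trans ?_) ?_
  · simpa using hc.mono (hadm.W1_mem_Icc zero_lt_one) (right_mem_Icc.mpr zero_le_one)
      (hadm.W1_mem_Icc zero_lt_one).2
  · have hfar := le_tailMass (H := H) (isProb_dirac y).1 (x := x) (k := 1)
      (dist_pos hconn hne)
    have hnear : tailMass H x 1 (dirac x) = 0 := tailMass_eq_zero x fun v hv => by
      by_cases hvx : v = x
      · simp [hvx]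
      · simp [dirac, hvx] at hv
    simpa using sum_le_Wh hconn hc (isProb_dirac x) (isProb_dirac y) x {1} (fun _ => 1)
      (by simp) (by simpa [hnear, dirac] using hfar)

theorem Wh_rw_lt_of_lt_ORic [Fintype V] (hconn : H.Connected) (hc : CostFn h D0 D1)
    (hxy : H.Adj x y) {b : ℝ} (hb : b * (1 - α) < ORic H h α x y) :
    Wh H h (rw H α x) (rw H α y) < (1 - b * (1 - α)) * h 1 := by
  rw [ORic, Wh_dirac_of_adj hconn hc hxy] at hb
  exact (div_lt_iff₀ hc.map_one_pos).mp (by linarith)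

theorem map_two_mul_sub_one_le_Wh_rw [Fintype V] (hconn : H.Connected) (hc : CostFn h D0 D1)
    (hx : IsProb (rw H α x)) (hy : IsProb (rw H α y)) (hα : 1 / 2 ≤ α) (hxy : x ≠ y) :
    h (2 * α - 1) ≤ Wh H h (rw H α x) (rw H α y) := by
  have hfar : α ≤ tailMass H x 1 (rw H α y) := by
    simpa using le_tailMass (H := H) hy.1 (x := x) (dist_pos hconn hxy)
  have hnear := tailMass_le_one_sub (H := H) hx x le_rfl
  have hα₁ : α ≤ 1 := by simpa using hx.apply_le_one x
  simpa using sum_le_Wh hconn hc hx hy x {1} (fun _ => 2 * α - 1)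
    (by simp only [Finset.mem_singleton, forall_eq]; constructor <;> linarith)
    (by simp only [Finset.mem_singleton, forall_eq, rw_self] at hnear ⊢; linarith)

/-- The cut at distance `1` gains `α` since `m_y` lies beyond it while `m_x` keeps mass `α` at
`x`, the cut at distance `d(x, y)` gains the mass `α` of `m_y` at `y`, and every cut in between
gains `1`. -/
theorem two_mul_map_add_le_Wh_rw [Fintype V] (hconn : H.Connected) (hc : CostFn h D0 D1)
    (hx : IsProb (rw H α x)) (hy : IsProb (rw H α y)) (hxy : 2 ≤ H.dist x y) :
    2 * h α + (H.dist x y - 2) * h 1 ≤ Wh H h (rw H α x) (rw H α y) := by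
  obtain ⟨m, hm⟩ : ∃ m, H.dist x y = m + 2 := ⟨H.dist x y - 2, by omega⟩
  have hα₀ : 0 ≤ α := by simpa using hx.1 x
  have hα₁ : α ≤ 1 := by simpa using hx.apply_le_one x
  have hxfar : ∀ k, 2 ≤ k → tailMass H x k (rw H α x) = 0 := fun k hk =>
    tailMass_eq_zero x fun v hv => (dist_le_one_of_rw_ne_zero hv).trans_lt hk
  have hynear : ∀ k ≤ m + 1, tailMass H x k (rw H α y) = 1 := fun k hk =>
    tailMass_eq_one hy x fun v hv => by
      have := dist_triangle hconn x v y
      have := dist_le_one_of_rw_ne_zero hv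
      rw [dist_comm] at this
      omega
  set c : ℕ → ℝ := fun k => if k = 1 ∨ k = m + 2 then α else 1
  have hsum : ∑ k ∈ Icc 1 (m + 2), h (c k) = 2 * h α + m * h 1 := by
    rw [sum_Icc_succ_top (by omega), ← add_sum_Ioc_eq_sum_Icc (by omega),
      sum_congr rfl (g := fun _ => h 1) fun k hk => ?_]
    · simp [c, Nat.card_Ioc]
      ring
    · have := mem_Ioc.mp hk
      simp only [c]
      rw [if_neg (by omega)]
  have hcut := sum_le_Wh hconn hc hx hy x (Icc 1 (m + 2)) c
    (fun k _ => by simp only [c]; split_ifs <;> constructor <;> linarith) fun k hk => by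
      obtain ⟨hk₁, hk₂⟩ := mem_Icc.mp hk
      rcases (show k = 1 ∨ k = m + 2 ∨ (2 ≤ k ∧ k ≤ m + 1) by omega) with rfl | rfl | ⟨hk₁, hk₂⟩
      · have := tailMass_le_one_sub (H := H) hx x le_rfl
        simp only [c, true_or, if_true, rw_self, hynear 1 (by omega)] at this ⊢
        linarith
      · simpa [c, hxfar _ (by omega : 2 ≤ m + 2)] using le_tailMass (H := H) hy.1 hm.ge
      · simp only [c, if_neg (by omega : ¬(k = 1 ∨ k = m + 2)), hynear k hk₂, hxfar k hk₁]
        norm_num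
  rw [hsum] at hcut
  rw [hm]
  push_cast
  linarith

end Curvature

section Infinite

variable {V : Type*} [Infinite V] {H : Hypergraph' V} {h : ℝ → ℝ}

theorem Wh_eq_zero_of_infinite (hconn : H.Connected) (h0 : h 0 = 0) (μ ν : V → ℝ) :
    Wh H h μ ν = 0 := by
  have hsub : {c | ∃ I ξ, WhAdmissible H μ ν I ξ ∧
      c = ∑ i ∈ range I, h (W1 H (ξ i) (ξ (i + 1)))} ⊆ {0} := by
    rintro _ ⟨I, ξ, hξ, rfl⟩
    refine sum_eq_zero fun i hi => ?_
    have hi := mem_range.mp hi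
    rw [W1_eq_zero_of_infinite hconn (hξ.2.2.1 i hi.le) (hξ.2.2.1 (i + 1) hi), h0]
  rcases Set.subset_singleton_iff_eq.mp hsub with hS | hS <;> simp [Wh, hS]

/-- With the junk values `W_h = 0` the curvature quotient is `(1 - α)⁻¹`, which is unbounded, so
its `liminf` is the junk value `0` as well. -/
theorem hLLY_eq_zero_of_infinite (hconn : H.Connected) (h0 : h 0 = 0) (x y : V) :
    hLLY H h x y = 0 := by
  have hT : Tendsto (fun α : ℝ => (1 - α)⁻¹) (𝓝[<] 1) atTop := by
    refine tendsto_inv_nhdsGT_zero.comp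
      (tendsto_nhdsWithin_of_tendsto_nhds_of_eventually_within _ ?_ ?_)
    · have : Tendsto (fun α : ℝ => 1 - α) (𝓝 1) (𝓝 0) :=
        (continuous_const.sub continuous_id).tendsto' 1 0 (sub_self 1)
      exact this.mono_left nhdsWithin_le_nhds
    · filter_upwards [self_mem_nhdsWithin] with α (hα : α < 1)
      exact sub_pos.mpr hα
  have huniv : {a : ℝ | ∀ᶠ α in 𝓝[<] 1, a ≤ ORic H h α x y / (1 - α)} = Set.univ :=
    eq_univ_of_forall fun a => (hT.eventually_ge_atTop a).mono fun α hα => by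
      simpa [ORic, Wh_eq_zero_of_infinite hconn h0] using hα
  rw [hLLY, liminf_eq, huniv, Real.sSup_univ]

end Infinite

/-- `hb₀` rules out the junk value `0` of the `liminf` of a function that is unbounded below. -/
theorem Real.eventually_lt_of_lt_liminf {ι : Type*} {l : Filter ι} {u : ι → ℝ} {b : ℝ}
    (hb : b < liminf u l) (hb₀ : 0 ≤ b) : ∀ᶠ i in l, b < u i := by
  refine Filter.eventually_lt_of_lt_liminf hb ?_
  by_contra hbdd
  have : {a | ∀ᶠ i in l, a ≤ u i} = ∅ := eq_empty_of_forall_notMem fun a ha => hbdd ⟨a, ha⟩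
  rw [liminf_eq, this, Real.sSup_empty] at hb
  linarith

section Main

variable {V : Type*} {H : Hypergraph' V} {h : ℝ → ℝ} {D0 D1 κ : ℝ}

theorem isProb_rw_of_chain [Fintype V] {α : ℝ} (hα₀ : 0 ≤ α) (hα₁ : α ≤ 1) {f : ℕ → V} {n : ℕ}
    (hn : 0 < n) (hadj : ∀ i < n, H.Adj (f i) (f (i + 1))) {i : ℕ} (hi : i ≤ n) :
    IsProb (rw H α (f i)) := by
  refine isProb_rw hα₀ hα₁ ?_
  rcases hi.lt_or_eq with hi | rfl
  · exact ⟨_, hadj i hi⟩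
  · obtain ⟨j, rfl⟩ : ∃ j, i = j + 1 := ⟨i - 1, by omega⟩
    exact ⟨f j, (hadj j (by omega)).symm⟩

theorem eventually_Wh_rw_le [Fintype V] (hconn : H.Connected) (hc : CostFn h D0 D1)
    (hlb : ∀ x y : V, H.Adj x y → κ ≤ hLLY H h x y) {b : ℝ} (hb₀ : 0 ≤ b) (hb : b < κ)
    {f : ℕ → V} {n : ℕ} (hn : 0 < n) (hadj : ∀ i < n, H.Adj (f i) (f (i + 1))) :
    ∀ᶠ α in 𝓝[<] 1, Wh H h (rw H α (f 0)) (rw H α (f n)) ≤ n * ((1 - b * (1 - α)) * h 1) := by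
  have hcurv : ∀ᶠ α in 𝓝[<] 1, ∀ i ∈ range n, b < ORic H h α (f i) (f (i + 1)) / (1 - α) :=
    (eventually_all_finset _).mpr fun i hi =>
      Real.eventually_lt_of_lt_liminf (hb.trans_le (hlb _ _ (hadj i (mem_range.mp hi)))) hb₀
  filter_upwards [hcurv, self_mem_nhdsWithin, nhdsWithin_le_nhds (eventually_gt_nhds one_pos)]
    with α hα (hα₁ : α < 1) hα₀
  calc Wh H h (rw H α (f 0)) (rw H α (f n))
      ≤ ∑ i ∈ range n, Wh H h (rw H α (f i)) (rw H α (f (i + 1))) :=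
        Wh_le_sum hconn hc.nonneg (μs := fun i => rw H α (f i))
          fun i hi => isProb_rw_of_chain hα₀.le hα₁.le hn hadj hi
    _ ≤ ∑ i ∈ range n, (1 - b * (1 - α)) * h 1 := sum_le_sum fun i hi =>
        (Wh_rw_lt_of_lt_ORic hconn hc (hadj i (mem_range.mp hi))
          ((lt_div_iff₀ (sub_pos.mpr hα₁)).mp (hα i hi))).le
    _ = n * ((1 - b * (1 - α)) * h 1) := by simp

theorem mul_dist_mul_le_of_le_hLLY [Fintype V] (hconn : H.Connected) (hc : CostFn h D0 D1)
    (hlb : ∀ x y : V, H.Adj x y → κ ≤ hLLY H h x y) (x y : V) :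
    κ * (H.dist x y * h 1) ≤ 2 * D1 := by
  have hh1 := hc.map_one_pos
  obtain ⟨f, hf0, hfd, hadj⟩ := hconn.exists_geodesic x y
  set d := H.dist x y with hd
  rcases d.eq_zero_or_pos with hd0 | hdpos
  · simp [hd0, hc.D1_nonneg]
  have hends : ∀ α, 0 ≤ α → α ≤ 1 → IsProb (rw H α x) ∧ IsProb (rw H α y) := fun α hα₀ hα₁ =>
    ⟨hf0 ▸ isProb_rw_of_chain hα₀ hα₁ hdpos hadj (Nat.zero_le d),
      hfd ▸ isProb_rw_of_chain hα₀ hα₁ hdpos hadj le_rfl⟩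
  suffices hκ : κ ≤ 2 * D1 / (d * h 1) by
    rwa [le_div_iff₀ (by positivity)] at hκ
  refine le_of_forall_lt_imp_le_of_dense fun b hb => ?_
  rcases le_or_gt b 0 with hb₀ | hb₀
  · exact hb₀.trans (div_nonneg (by linarith [hc.D1_nonneg]) (by positivity))
  rw [le_div_iff₀ (by positivity)]
  have hev : ∀ᶠ α in 𝓝[<] 1, 1 / 2 < α ∧ α < 1 ∧
      Wh H h (rw H α x) (rw H α y) ≤ d * ((1 - b * (1 - α)) * h 1) := by
    filter_upwards [eventually_Wh_rw_le hconn hc hlb hb₀.le hb hdpos hadj, self_mem_nhdsWithin,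
      nhdsWithin_le_nhds (eventually_gt_nhds (by norm_num : (1 / 2 : ℝ) < 1))]
      with α hup (hα₁ : α < 1) hα₀
    exact ⟨hα₀, hα₁, by rwa [hf0, hfd] at hup⟩
  rcases (show 2 ≤ d ∨ d = 1 by omega) with hd2 | hd1
  · refine ge_of_tendsto (hc.d1.const_mul 2) ?_
    filter_upwards [hev] with α ⟨hα₀, hα₁, hup⟩
    obtain ⟨hx, hy⟩ := hends α (by linarith) hα₁.le
    have hlow := two_mul_map_add_le_Wh_rw hconn hc hx hy hd2
    rw [mul_div_assoc', le_div_iff₀ (sub_pos.mpr hα₁)]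
    linarith
  · refine ge_of_tendsto hc.tendsto_slope_two_mul_sub_one ?_
    filter_upwards [hev] with α ⟨hα₀, hα₁, hup⟩
    obtain ⟨hx, hy⟩ := hends α (by linarith) hα₁.le
    have hxy : x ≠ y := by
      rintro rfl
      simp only [dist_self] at hd
      omega
    have hlow := map_two_mul_sub_one_le_Wh_rw hconn hc hx hy hα₀.le hxy
    rw [hd1, Nat.cast_one] at hup ⊢
    rw [le_div_iff₀ (sub_pos.mpr hα₁)]
    linarith

end Main

theorem bonnet_myers_general {V : Type*} (H : Hypergraph' V)
    (hconn : H.Connected)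
    (h : ℝ → ℝ) (D0 D1 : ℝ) (hc : CostFn h D0 D1)
    (κ : ℝ) (hκ : 0 < κ)
    (hlb : ∀ x y : V, H.Adj x y → κ ≤ hLLY H h x y) :
    ∀ x y : V, (H.dist x y : ℤ) ≤ ⌊(D1 / h 1) * (2 / κ)⌋ := by
  intro x y
  have hh1 := hc.map_one_pos
  have hbound : κ * (H.dist x y * h 1) ≤ 2 * D1 := by
    cases finite_or_infinite V
    · have := Fintype.ofFinite V
      exact mul_dist_mul_le_of_le_hLLY hconn hc hlb x y
    -- on an infinite vertex set `hLLY` is the junk value `0`, so no edge can lie on a geodesic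
    · obtain ⟨f, -, -, hadj⟩ := hconn.exists_geodesic x y
      rcases (H.dist x y).eq_zero_or_pos with hd | hd
      · simp [hd, hc.D1_nonneg]
      · have := hlb _ _ (hadj 0 hd)
        rw [hLLY_eq_zero_of_infinite hconn hc.zero] at this
        linarith
  rw [Int.le_floor, Int.cast_natCast, div_mul_div_comm, le_div_iff₀ (by positivity)]
  linarith

/-- Bonnet–Myers type inequality for the `h`-LLY–Ricci curvature. -/
theorem bonnet_myers {V : Type*} (H : Hypergraph' V)
    (hconn : H.Connected) (hlf : H.LocallyFinite) (hsimp : H.Simple)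
    (h : ℝ → ℝ) (D0 D1 : ℝ) (hc : CostFn h D0 D1)
    (κ : ℝ) (hκ : 0 < κ)
    (hlb : ∀ x y : V, H.Adj x y → κ ≤ hLLY H h x y) :
    ∀ x y : V, (H.dist x y : ℤ) ≤ ⌊(D1 / h 1) * (2 / κ)⌋ :=
  bonnet_myers_general H hconn h D0 D1 hc κ hκ hlb
end

section
/- For the complete graph K_n (n ≥ 2) and adjacent vertices x, y, the (α,h)-Ollivier–Ricci curvature is κ̃(α,h;x,y) = (h(1) − h(|α − (1−α)/(n−1)|))/h(1) for all α ∈ [0,1), and consequently the h-LLY–Ricci curvature is κ̃(h;x,y) = (n/(n−1)) · h'(1)/h(1). -/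
open Filter Set Classical

/-- The complete graph on `n` vertices, as a hypergraph whose hyperedges are
the two-element subsets. -/
def completeH (n : ℕ) : Hypergraph' (Fin n) :=
  ⟨{e | ∃ a b : Fin n, a ≠ b ∧ e = {a, b}}⟩

/-!
On `K_n` distinct vertices are at distance one, so `W₁` between probability vectors is their
total variation distance. Total variation satisfies the triangle inequality and a monotone concave
`h` with `h 0 = 0` is subadditive, so between two measures differing inside one edge no chain of
steps beats the single step, and `W_h = h (tvDist)`. The lazy walks at `x ≠ y` differ only at `x`
and `y`, by `|α - (1 - α)/(n - 1)|`; near `α = 1` this is `1 - n/(n - 1) (1 - α)`, so the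
LLY limit is the slope `h'(1)` rescaled by `n/(n - 1)`.
-/

open Topology

theorem ConcaveOn.mul_apply_le_apply_mul {h : ℝ → ℝ} (hconc : ConcaveOn ℝ (Icc 0 1) h)
    (h0 : h 0 = 0) {a x : ℝ} (ha : a ∈ Icc (0 : ℝ) 1) (hx : x ∈ Icc (0 : ℝ) 1) :
    a * h x ≤ h (a * x) := by
  simpa [h0] using hconc.2 hx ⟨le_rfl, zero_le_one⟩ ha.1 (sub_nonneg.mpr ha.2)
    (add_sub_cancel a 1)

theorem ConcaveOn.apply_le_sum_apply_of_le_sum {h : ℝ → ℝ} (hconc : ConcaveOn ℝ (Icc 0 1) h)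
    (hmono : MonotoneOn h (Icc 0 1)) (h0 : h 0 = 0) {ι : Type*} {I : Finset ι} {s : ι → ℝ}
    {t : ℝ} (ht : t ∈ Icc (0 : ℝ) 1) (hs : ∀ i ∈ I, s i ∈ Icc (0 : ℝ) 1)
    (hts : t ≤ ∑ i ∈ I, s i) :
    h t ≤ ∑ i ∈ I, h (s i) := by
  have hnonneg : ∀ x ∈ Icc (0 : ℝ) 1, 0 ≤ h x := fun x hx =>
    h0 ▸ hmono ⟨le_rfl, zero_le_one⟩ hx hx.1
  have hsum_nonneg : 0 ≤ ∑ i ∈ I, h (s i) := Finset.sum_nonneg fun i hi => hnonneg _ (hs i hi)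
  rcases ht.1.eq_or_lt with rfl | htpos
  · rwa [h0]
  by_cases hbig : ∃ i ∈ I, t ≤ s i
  · obtain ⟨i, hi, hti⟩ := hbig
    calc h t ≤ h (s i) := hmono ht (hs i hi) hti
      _ ≤ ∑ i ∈ I, h (s i) :=
        Finset.single_le_sum (fun j hj => hnonneg _ (hs j hj)) hi
  push Not at hbig
  have hratio : ∀ i ∈ I, s i / t * h t ≤ h (s i) := fun i hi => by
    have hratio_mem : s i / t ∈ Icc (0 : ℝ) 1 :=
      ⟨div_nonneg (hs i hi).1 htpos.le, (div_le_one htpos).mpr (hbig i hi).le⟩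
    simpa [div_mul_cancel₀ _ htpos.ne'] using hconc.mul_apply_le_apply_mul h0 hratio_mem ht
  calc h t ≤ (∑ i ∈ I, s i) / t * h t :=
        le_mul_of_one_le_left (hnonneg t ht) ((one_le_div htpos).mpr hts)
    _ = ∑ i ∈ I, s i / t * h t := by rw [Finset.sum_div, Finset.sum_mul]
    _ ≤ ∑ i ∈ I, h (s i) := Finset.sum_le_sum hratio

theorem CostFn.apply_one_pos {h : ℝ → ℝ} {D0 D1 : ℝ} (hc : CostFn h D0 D1) : 0 < h 1 := by
  obtain ⟨t, hslope, ht⟩ :=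
    ((hc.d0.eventually (eventually_gt_nhds hc.d0_pos)).and (Ioo_mem_nhdsGT one_pos)).exists
  calc 0 < h t := (div_pos_iff_of_pos_right ht.1).mp hslope
    _ ≤ h 1 := hc.mono ⟨ht.1.le, ht.2.le⟩ ⟨zero_le_one, le_rfl⟩ ht.2.le

theorem tendsto_slope_comp_affine {h : ℝ → ℝ} {D1 k : ℝ} (hk : 0 < k)
    (hd1 : Tendsto (fun t => (h 1 - h t) / (1 - t)) (𝓝[<] 1) (𝓝 D1)) :
    Tendsto (fun α => (h 1 - h (1 - k * (1 - α))) / (1 - α)) (𝓝[<] 1) (𝓝 (k * D1)) := by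
  have haffine : Tendsto (fun α : ℝ => 1 - k * (1 - α)) (𝓝[<] 1) (𝓝[<] 1) := by
    refine tendsto_nhdsWithin_of_tendsto_nhds_of_eventually_within _ ?_ ?_
    · have : Continuous fun α : ℝ => 1 - k * (1 - α) := by fun_prop
      simpa using this.tendsto' 1 1 (by simp) |>.mono_left nhdsWithin_le_nhds
    · filter_upwards [self_mem_nhdsWithin] with α (hα : α < 1)
      simpa using mul_pos hk (sub_pos.mpr hα)
  refine ((hd1.comp haffine).const_mul k).congr' ?_
  filter_upwards [self_mem_nhdsWithin] with α (hα : α < 1)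
  have : 1 - α ≠ 0 := (sub_pos.mpr hα).ne'
  simp only [Function.comp_apply, sub_sub_cancel]
  field_simp

section FiniteProb

variable {V : Type*} [Fintype V]

theorem isProb_iff_of_fintype {μ : V → ℝ} : IsProb μ ↔ (∀ v, 0 ≤ μ v) ∧ ∑ v, μ v = 1 := by
  rw [IsProb, tsum_fintype]
  exact ⟨fun ⟨hnn, _, hsum⟩ => ⟨hnn, hsum⟩, fun ⟨hnn, hsum⟩ => ⟨hnn, toFinite _, hsum⟩⟩

/-- The total variation distance `∑ (μ - ν)⁺`, written as the mass of `μ` not shared with `ν`. -/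
def tvDist (μ ν : V → ℝ) : ℝ := ∑ v, (μ v - min (μ v) (ν v))

theorem sub_min_le_tvDist (μ ν : V → ℝ) (v : V) : μ v - min (μ v) (ν v) ≤ tvDist μ ν :=
  Finset.single_le_sum (f := fun v => μ v - min (μ v) (ν v))
    (fun _ _ => sub_nonneg.mpr (min_le_left _ _)) (Finset.mem_univ v)

theorem tvDist_nonneg (μ ν : V → ℝ) : 0 ≤ tvDist μ ν :=
  Finset.sum_nonneg fun _ _ => sub_nonneg.mpr (min_le_left _ _)

theorem tvDist_self (μ : V → ℝ) : tvDist μ μ = 0 := by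
  simp [tvDist]

theorem tvDist_eq_one_sub {μ : V → ℝ} (hμ : IsProb μ) (ν : V → ℝ) :
    tvDist μ ν = 1 - ∑ v, min (μ v) (ν v) := by
  rw [tvDist, Finset.sum_sub_distrib, (isProb_iff_of_fintype.mp hμ).2]

theorem tvDist_comm {μ ν : V → ℝ} (hμ : IsProb μ) (hν : IsProb ν) :
    tvDist μ ν = tvDist ν μ := by
  simp only [tvDist_eq_one_sub hμ, tvDist_eq_one_sub hν, min_comm]

theorem tvDist_le_one {μ ν : V → ℝ} (hμ : IsProb μ) (hν : IsProb ν) : tvDist μ ν ≤ 1 := by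
  rw [tvDist_eq_one_sub hμ, sub_le_self_iff]
  exact Finset.sum_nonneg fun v _ =>
    le_min ((isProb_iff_of_fintype.mp hμ).1 v) ((isProb_iff_of_fintype.mp hν).1 v)

theorem tvDist_triangle (μ ν ρ : V → ℝ) : tvDist μ ρ ≤ tvDist μ ν + tvDist ν ρ := by
  rw [tvDist, tvDist, tvDist, ← Finset.sum_add_distrib]
  refine Finset.sum_le_sum fun v _ => ?_
  simp only [min_def]
  split_ifs <;> linarith

theorem tvDist_le_sum_range (ξ : ℕ → V → ℝ) (I : ℕ) :
    tvDist (ξ 0) (ξ I) ≤ ∑ i ∈ Finset.range I, tvDist (ξ i) (ξ (i + 1)) := by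
  induction I with
  | zero => simp [tvDist_self]
  | succ I ih =>
    rw [Finset.sum_range_succ]
    exact (tvDist_triangle _ (ξ I) _).trans (by linarith)

theorem tvDist_ite_ite [DecidableEq V] {x y : V} (hxy : x ≠ y) (a b : ℝ) :
    tvDist (fun v => if v = x then a else b) (fun v => if v = y then a else b) = |a - b| := by
  rw [tvDist, Fintype.sum_eq_add x y hxy (fun v hv => by simp [hv.1, hv.2])]
  simp only [↓reduceIte, if_neg hxy, if_neg hxy.symm]
  rcases le_total a b with hab | hab
  · rw [min_eq_left hab, min_eq_right hab, abs_of_nonpos (sub_nonpos.mpr hab)]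
    ring
  · rw [min_eq_right hab, min_eq_left hab, abs_of_nonneg (sub_nonneg.mpr hab)]
    ring

end FiniteProb

theorem support_ite_sub_ite_subset {V : Type*} [DecidableEq V] (x y : V) (a b : ℝ) :
    Function.support (fun v => (if v = y then a else b) - (if v = x then a else b)) ⊆ {x, y} := by
  intro v hv
  by_contra hxy
  simp only [mem_insert_iff, mem_singleton_iff, not_or] at hxy
  simp [hxy.1, hxy.2] at hv

theorem Hypergraph'.dist_self_s17 {V : Type*} (H : Hypergraph' V) (x : V) : H.dist x x = 0 :=
  Nat.sInf_eq_zero.mpr <| .inl ⟨fun _ => x, rfl, rfl, by simp⟩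

section UnitDistance

variable {V : Type*} [Fintype V]

theorem IsCoupling.sum_right {π : V → V → ℝ} {μ ν : V → ℝ} (hπ : IsCoupling π μ ν) (a : V) :
    ∑ b, π a b = μ a := by
  rw [← hπ.2.1 a, tsum_fintype]

theorem IsCoupling.sum_left {π : V → V → ℝ} {μ ν : V → ℝ} (hπ : IsCoupling π μ ν) (b : V) :
    ∑ a, π a b = ν b := by
  rw [← hπ.2.2 b, tsum_fintype]

theorem IsCoupling.diag_le_min {π : V → V → ℝ} {μ ν : V → ℝ} (hπ : IsCoupling π μ ν) (a : V) :
    π a a ≤ min (μ a) (ν a) :=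
  le_min (hπ.sum_right a ▸ Finset.single_le_sum (fun b _ => hπ.1 a b) (Finset.mem_univ a))
    (hπ.sum_left a ▸ Finset.single_le_sum (fun b _ => hπ.1 b a) (Finset.mem_univ a))

theorem coupling_cost_eq {H : Hypergraph' V} (hH : ∀ a b, a ≠ b → H.dist a b = 1)
    {π : V → V → ℝ} {μ ν : V → ℝ} (hπ : IsCoupling π μ ν) :
    ∑' p : V × V, (H.dist p.1 p.2 : ℝ) * π p.1 p.2 = ∑ a, (μ a - π a a) := by
  classical
  rw [tsum_fintype, Fintype.sum_prod_type]
  refine Finset.sum_congr rfl fun a _ => ?_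
  rw [← hπ.sum_right a, ← Finset.add_sum_erase _ _ (Finset.mem_univ a),
    ← Finset.add_sum_erase _ _ (Finset.mem_univ a), H.dist_self_s17, add_sub_cancel_left]
  simp only [Nat.cast_zero, zero_mul, zero_add]
  exact Finset.sum_congr rfl fun b hb => by
    rw [hH a b (Finset.ne_of_mem_erase hb).symm, Nat.cast_one, one_mul]

/-- Keep the common mass `min μ ν` in place and ship the excess of `μ` to the deficit of `ν`
proportionally. -/
noncomputable def tvCoupling (μ ν : V → ℝ) (a b : V) : ℝ :=
  (if a = b then min (μ a) (ν a) else 0) +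
    (μ a - min (μ a) (ν a)) * (ν b - min (μ b) (ν b)) / tvDist μ ν

theorem tvCoupling_self (μ ν : V → ℝ) (a : V) : tvCoupling μ ν a a = min (μ a) (ν a) := by
  have hzero : (μ a - min (μ a) (ν a)) * (ν a - min (μ a) (ν a)) = 0 := by
    rcases le_total (μ a) (ν a) with h | h <;> simp [h]
  simp [tvCoupling, hzero]

theorem isCoupling_tvCoupling {μ ν : V → ℝ} (hμ : IsProb μ) (hν : IsProb ν) :
    IsCoupling (tvCoupling μ ν) μ ν := by
  classical
  have hcancel : ∀ r, 0 ≤ r → r ≤ tvDist μ ν → r * tvDist μ ν / tvDist μ ν = r :=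
    fun r hr hrs => by
      rcases eq_or_ne (tvDist μ ν) 0 with hs | hs
      · rw [hs, mul_zero, div_zero, le_antisymm (hs ▸ hrs) hr]
      · exact mul_div_cancel_right₀ r hs
  have hνsum : ∑ b, (ν b - min (μ b) (ν b)) = tvDist μ ν := by
    rw [tvDist_comm hμ hν, tvDist]
    simp only [min_comm]
  refine ⟨fun a b => add_nonneg ?_ ?_, fun a => ?_, fun b => ?_⟩
  · have := (isProb_iff_of_fintype.mp hμ).1 a; have := (isProb_iff_of_fintype.mp hν).1 a
    split_ifs <;> positivity
  · exact div_nonneg (mul_nonneg (sub_nonneg.mpr (min_le_left _ _))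
      (sub_nonneg.mpr (min_le_right _ _))) (tvDist_nonneg μ ν)
  · rw [tsum_fintype]
    simp only [tvCoupling, Finset.sum_add_distrib, Finset.sum_ite_eq, Finset.mem_univ, if_true]
    rw [← Finset.sum_div, ← Finset.mul_sum, hνsum,
      hcancel _ (sub_nonneg.mpr (min_le_left _ _)) (sub_min_le_tvDist μ ν a)]
    ring
  · have hνb : ν b - min (μ b) (ν b) ≤ tvDist μ ν := by
      rw [min_comm, tvDist_comm hμ hν]; exact sub_min_le_tvDist ν μ b
    rw [tsum_fintype]
    simp only [tvCoupling, Finset.sum_add_distrib, Finset.sum_ite_eq', Finset.mem_univ, if_true]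
    rw [← Finset.sum_div, ← Finset.sum_mul, show ∑ a, (μ a - min (μ a) (ν a)) = tvDist μ ν from rfl,
      mul_comm, hcancel _ (sub_nonneg.mpr (min_le_right _ _)) hνb]
    ring

theorem W1_eq_tvDist {H : Hypergraph' V} (hH : ∀ a b, a ≠ b → H.dist a b = 1)
    {μ ν : V → ℝ} (hμ : IsProb μ) (hν : IsProb ν) : W1 H μ ν = tvDist μ ν := by
  refine IsLeast.csInf_eq ⟨⟨tvCoupling μ ν, isCoupling_tvCoupling hμ hν, ?_⟩, ?_⟩
  · simp only [coupling_cost_eq hH (isCoupling_tvCoupling hμ hν), tvCoupling_self, tvDist]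
  · rintro c ⟨π, hπ, rfl⟩
    rw [coupling_cost_eq hH hπ]
    exact Finset.sum_le_sum fun a _ => sub_le_sub_left (hπ.diag_le_min a) _

end UnitDistance

theorem Wh_eq_of_support_subset {V : Type*} [Fintype V] {H : Hypergraph' V}
    (hH : ∀ a b, a ≠ b → H.dist a b = 1) {h : ℝ → ℝ} (hconc : ConcaveOn ℝ (Icc 0 1) h)
    (hmono : MonotoneOn h (Icc 0 1)) (h0 : h 0 = 0) {μ ν : V → ℝ} (hμ : IsProb μ)
    (hν : IsProb ν) {e : Set V} (he : e ∈ H.E)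
    (hsupp : Function.support (fun v => ν v - μ v) ⊆ e) :
    Wh H h μ ν = h (tvDist μ ν) := by
  refine IsLeast.csInf_eq ⟨⟨1, fun i => if i = 0 then μ else ν, ?_, ?_⟩, ?_⟩
  · refine ⟨rfl, rfl, fun i _ => ?_, fun i hi => ⟨e, he, ?_⟩⟩
    · dsimp only; split_ifs <;> assumption
    · obtain rfl : i = 0 := Nat.lt_one_iff.mp hi
      simpa using hsupp
  · simp [W1_eq_tvDist hH hμ hν]
  · rintro c ⟨I, ξ, ⟨rfl, rfl, hprob, -⟩, rfl⟩
    have hstep : ∀ i ∈ Finset.range I, IsProb (ξ i) ∧ IsProb (ξ (i + 1)) := fun i hi =>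
      ⟨hprob i (Finset.mem_range.mp hi).le, hprob (i + 1) (Finset.mem_range.mp hi)⟩
    rw [Finset.sum_congr rfl fun i hi => by rw [W1_eq_tvDist hH (hstep i hi).1 (hstep i hi).2]]
    exact hconc.apply_le_sum_apply_of_le_sum hmono h0 ⟨tvDist_nonneg _ _, tvDist_le_one hμ hν⟩
      (fun i hi => ⟨tvDist_nonneg _ _, tvDist_le_one (hstep i hi).1 (hstep i hi).2⟩)
      (tvDist_le_sum_range ξ I)

theorem rw_one {V : Type*} (H : Hypergraph' V) (x : V) : rw H 1 x = dirac x := by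
  ext v
  simp [rw, dirac]

section CompleteGraph

variable {n : ℕ}

theorem pair_mem_completeH {a b : Fin n} (hab : a ≠ b) :
    ({a, b} : Set (Fin n)) ∈ (completeH n).E :=
  ⟨a, b, hab, rfl⟩

theorem completeH_adj_iff {x y : Fin n} : (completeH n).Adj x y ↔ x ≠ y :=
  ⟨And.left, fun hxy => ⟨hxy, {x, y}, pair_mem_completeH hxy, by simp, by simp⟩⟩

theorem completeH_dist_of_ne {x y : Fin n} (hxy : x ≠ y) : (completeH n).dist x y = 1 := by
  have hpath : (completeH n).IsPath x y 1 :=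
    ⟨fun i => if i = 0 then x else y, rfl, rfl, fun i hi => by
      obtain rfl : i = 0 := Nat.lt_one_iff.mp hi
      exact ⟨{x, y}, pair_mem_completeH hxy, by simp, by simp⟩⟩
  have hpos : (completeH n).dist x y ≠ 0 := fun hzero => by
    rcases Nat.sInf_eq_zero.mp hzero with ⟨f, hf0, hf, -⟩ | hempty
    · exact hxy (hf0.symm.trans hf)
    · exact hempty.subset hpath
  have : (completeH n).dist x y ≤ 1 := Nat.sInf_le hpath
  omega

theorem completeH_degree (x : Fin n) : (completeH n).degree x = n - 1 := by
  have hnbrs : {y | (completeH n).Adj x y} = ({x}ᶜ : Set (Fin n)) := by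
    ext y; simp [completeH_adj_iff, ne_comm]
  rw [Hypergraph'.degree, hnbrs, ncard_eq_toFinset_card']
  simp [Finset.card_compl]

theorem completeH_rw (α : ℝ) (x : Fin n) :
    rw (completeH n) α x = fun v => if v = x then α else (1 - α) / ((n : ℝ) - 1) := by
  ext v
  rcases eq_or_ne v x with rfl | hvx
  · simp [rw]
  · simp [rw, hvx, completeH_adj_iff.mpr hvx.symm, completeH_degree,
      Nat.cast_sub (Nat.one_le_of_lt x.pos)]

theorem isProb_completeH_rw (hn : 2 ≤ n) {α : ℝ} (hα : α ∈ Icc (0 : ℝ) 1) (x : Fin n) :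
    IsProb (rw (completeH n) α x) := by
  have hdeg : 0 < (n : ℝ) - 1 := sub_pos.mpr (by exact_mod_cast hn)
  rw [completeH_rw, isProb_iff_of_fintype]
  refine ⟨fun v => ?_, ?_⟩
  · split_ifs
    · exact hα.1
    · exact div_nonneg (sub_nonneg.mpr hα.2) hdeg.le
  · rw [Fintype.sum_eq_add_sum_compl x, if_pos rfl,
      Finset.sum_congr rfl fun v hv => if_neg (Finset.mem_compl.mp hv ∘ Finset.mem_singleton.mpr),
      Finset.sum_const, Finset.card_compl, Finset.card_singleton, Fintype.card_fin, nsmul_eq_mul,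
      Nat.cast_sub (by omega), Nat.cast_one]
    field_simp
    ring

theorem completeH_ORic {h : ℝ → ℝ} (hconc : ConcaveOn ℝ (Icc 0 1) h)
    (hmono : MonotoneOn h (Icc 0 1)) (h0 : h 0 = 0) (hn : 2 ≤ n) {x y : Fin n} (hxy : x ≠ y)
    {α : ℝ} (hα : α ∈ Icc (0 : ℝ) 1) :
    ORic (completeH n) h α x y = 1 - h |α - (1 - α) / ((n : ℝ) - 1)| / h 1 := by
  have hWh : ∀ β ∈ Icc (0 : ℝ) 1, Wh (completeH n) h (rw (completeH n) β x)
      (rw (completeH n) β y) = h |β - (1 - β) / ((n : ℝ) - 1)| := fun β hβ => by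
    rw [Wh_eq_of_support_subset (fun _ _ => completeH_dist_of_ne) hconc hmono h0
      (isProb_completeH_rw hn hβ x) (isProb_completeH_rw hn hβ y) (pair_mem_completeH hxy),
      completeH_rw, completeH_rw, tvDist_ite_ite hxy]
    rw [completeH_rw, completeH_rw]
    exact support_ite_sub_ite_subset x y _ _
  rw [ORic, ← rw_one, ← rw_one, hWh α hα, hWh 1 ⟨zero_le_one, le_rfl⟩]
  norm_num

end CompleteGraph

/-- Curvatures of the complete graph `K_n`. -/
theorem curvature_complete_graph (n : ℕ) (hn : 2 ≤ n)
    (h : ℝ → ℝ) (D0 D1 : ℝ) (hc : CostFn h D0 D1)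
    (x y : Fin n) (hxy : x ≠ y) :
    (∀ α ∈ Set.Ico (0 : ℝ) 1,
      ORic (completeH n) h α x y =
        (h 1 - h |α - (1 - α) / ((n : ℝ) - 1)|) / h 1) ∧
    hLLY (completeH n) h x y = ((n : ℝ) / ((n : ℝ) - 1)) * (D1 / h 1) := by
  have h1 : h 1 ≠ 0 := hc.apply_one_pos.ne'
  have hORic α (hα : α ∈ Icc (0 : ℝ) 1) := completeH_ORic hc.concave hc.mono hc.zero hn hxy hα
  refine ⟨fun α hα => by
    rw [hORic α (Ico_subset_Icc_self hα)]; field_simp, ?_⟩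
  have hn' : (2 : ℝ) ≤ n := by exact_mod_cast hn
  have hdeg : 0 < (n : ℝ) - 1 := by linarith
  have hk : 0 < (n : ℝ) / ((n : ℝ) - 1) := by positivity
  have heq : (fun α => ORic (completeH n) h α x y / (1 - α)) =ᶠ[𝓝[<] 1]
      fun α => (h 1 - h (1 - (n : ℝ) / ((n : ℝ) - 1) * (1 - α))) / (1 - α) / h 1 := by
    filter_upwards [Ioo_mem_nhdsLT (show (1 / 2 : ℝ) < 1 by norm_num)] with α hα
    have hdisp : α - (1 - α) / ((n : ℝ) - 1) = 1 - (n : ℝ) / ((n : ℝ) - 1) * (1 - α) := by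
      field_simp; ring
    have hdisp_nonneg : 0 ≤ α - (1 - α) / ((n : ℝ) - 1) := by
      rw [sub_nonneg, div_le_iff₀ hdeg]; nlinarith [hα.1]
    rw [hORic α ⟨by linarith [hα.1], hα.2.le⟩, abs_of_nonneg hdisp_nonneg, hdisp]
    field_simp
  rw [hLLY, (((tendsto_slope_comp_affine hk hc.d1).div_const (h 1)).congr' heq.symm).liminf_eq]
  ring
end
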